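/- Backward gradient vector norm bound. Consider the ResNet with differentiable activation satisfying |φ'(z)| ≤ C_φ for all z, and parameters satisfying ‖w^{(L+1)}‖₂ ≤ 2√n and ‖W^{(ℓ)}‖ ≤ 3√n, ‖V^{(ℓ)}‖ ≤ 3√n for all ℓ = 1,…,L. Define δ^{(L)} = (σ_w/√n)·w^{(L+1)} and δ^{(ℓ)} = ( I_n + α·(σ_w/√n)·W^{(ℓ+1)ᵀ}·diag{φ'(g^{(ℓ+1)})}·(σ_v/√n)·V^{(ℓ+1)ᵀ} )·δ^{(ℓ+1)} for ℓ = L−1,…,0 (so δ^{(ℓ)} = ∇_{x^{(ℓ)}} f). Then for every ℓ ∈ {0,1,…,L}: ‖δ^{(ℓ)}‖₂ ≤ (1 + 9α·C_φ·σ_v·σ_w)^{L−ℓ} · 2σ_w. In particular ‖δ^{(ℓ)}‖₂ ≤ K₂ := (1 + 9α·C_φ·σ_v·σ_w)^L · 2σ_w for all ℓ. -/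

import Mathlib

/-! Each backward step multiplies `δ` by `I + (α σ_w σ_v / n) Wᵀ diag(φ'(g)) Vᵀ`, whose spectral
norm is at most `1 + (α σ_w σ_v / n) · 3√n · C_φ · 3√n = 1 + 9 α C_φ σ_v σ_w`, while
`‖δ^{(L)}‖ ≤ (σ_w / √n) · 2√n = 2 σ_w`; the bound follows by induction down the layers. -/

open MeasureTheory ProbabilityTheory Filter

noncomputable section

/-- Index type for all ResNet parameters: w^{(L+1)}, {W^{(ℓ)}}, {V^{(ℓ)}}, U. -/
abbrev ParamIdx (n L d : ℕ) : Type :=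
  (Fin n) ⊕ (Fin L × Fin n × Fin n) ⊕ (Fin L × Fin n × Fin n) ⊕ (Fin n × Fin d)

/-- The full (vectorized) parameter vector. -/
abbrev Params (n L d : ℕ) : Type := ParamIdx n L d → ℝ

/-- Last-layer weight vector w^{(L+1)}. -/
def wOut {n L d : ℕ} (θ : Params n L d) : Fin n → ℝ := fun i => θ (Sum.inl i)

/-- W^{(ℓ)} for ℓ = 1,…,L (zero outside this range). -/
def Wmat {n L d : ℕ} (θ : Params n L d) (ℓ : ℕ) : Matrix (Fin n) (Fin n) ℝ :=
  if h : 1 ≤ ℓ ∧ ℓ ≤ L then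
    Matrix.of fun i j => θ (Sum.inr (Sum.inl (⟨ℓ - 1, by omega⟩, i, j)))
  else 0

/-- V^{(ℓ)} for ℓ = 1,…,L (zero outside this range). -/
def Vmat {n L d : ℕ} (θ : Params n L d) (ℓ : ℕ) : Matrix (Fin n) (Fin n) ℝ :=
  if h : 1 ≤ ℓ ∧ ℓ ≤ L then
    Matrix.of fun i j => θ (Sum.inr (Sum.inr (Sum.inl (⟨ℓ - 1, by omega⟩, i, j))))
  else 0

/-- Input lifting matrix U. -/
def Umat {n L d : ℕ} (θ : Params n L d) : Matrix (Fin n) (Fin d) ℝ :=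
  Matrix.of fun i j => θ (Sum.inr (Sum.inr (Sum.inr (i, j))))

/-- Euclidean (ℓ²) norm of a finite vector. -/
def l2norm {k : ℕ} (v : Fin k → ℝ) : ℝ := Real.sqrt (∑ i, (v i) ^ 2)

/-- Euclidean norm of a full parameter vector. -/
def paramNorm {n L d : ℕ} (θ : Params n L d) : ℝ := Real.sqrt (∑ i, (θ i) ^ 2)

/-- Spectral (operator) norm of a matrix. -/
def specNorm {m k : ℕ} (A : Matrix (Fin m) (Fin k) ℝ) : ℝ :=
  sSup ((fun v => l2norm (A.mulVec v)) '' {v | l2norm v ≤ 1})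

/-- Smallest singular value of a matrix. -/
def singMin {m k : ℕ} (A : Matrix (Fin m) (Fin k) ℝ) : ℝ :=
  sInf ((fun v => l2norm (A.mulVec v)) '' {v | l2norm v = 1})

/-- Frobenius norm of a matrix. -/
def frobNorm {m k : ℕ} (A : Matrix (Fin m) (Fin k) ℝ) : ℝ :=
  Real.sqrt (∑ i, ∑ j, (A i j) ^ 2)

/-- Layer activations x^{(ℓ)} of the ResNet. -/
def xvec {n L d : ℕ} (φ : ℝ → ℝ) (α σv σw : ℝ) (θ : Params n L d) (x : Fin d → ℝ) :
    ℕ → Fin n → ℝ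
  | 0 => (Real.sqrt d)⁻¹ • (Umat θ).mulVec x
  | ℓ + 1 =>
      xvec φ α σv σw θ x ℓ +
        (α * σv / Real.sqrt n) • (Vmat θ (ℓ + 1)).mulVec
          (fun i => φ ((σw / Real.sqrt n) *
              (Wmat θ (ℓ + 1)).mulVec (xvec φ α σv σw θ x ℓ) i))

/-- Pre-activations g^{(ℓ)} of the ResNet (meaningful for ℓ = 1,…,L). -/
def gvec {n L d : ℕ} (φ : ℝ → ℝ) (α σv σw : ℝ) (θ : Params n L d) (x : Fin d → ℝ)
    (ℓ : ℕ) : Fin n → ℝ :=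
  (σw / Real.sqrt n) • (Wmat θ ℓ).mulVec (xvec φ α σv σw θ x (ℓ - 1))

/-- The ResNet output f(x;θ). -/
def fnet {n L d : ℕ} (φ : ℝ → ℝ) (α σv σw : ℝ) (θ : Params n L d) (x : Fin d → ℝ) : ℝ :=
  (σw / Real.sqrt n) * ∑ i, wOut θ i * xvec φ α σv σw θ x L i

/-- The i.i.d. standard Gaussian initialization measure on the parameters. -/
def initMeasure (n L d : ℕ) : Measure (Params n L d) :=
  Measure.pi fun _ => gaussianReal 0 1

/-- Standard Gaussian on ℝ². -/
def stdGauss2 : Measure (ℝ × ℝ) := (gaussianReal 0 1).prod (gaussianReal 0 1)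

/-- The centered bivariate Gaussian N(0,Σ) for Σ = [[K11,K12],[K12,K22]] positive
semidefinite, realized via the Cholesky factorization. -/
def biGauss (K11 K12 K22 : ℝ) : Measure (ℝ × ℝ) :=
  stdGauss2.map (fun z => (Real.sqrt K11 * z.1,
    (K12 / Real.sqrt K11) * z.1 + Real.sqrt (K22 - K12 ^ 2 / K11) * z.2))

/-- T(Σ) = E_{(u,v)∼N(0,Σ)}[φ(u)φ(v)]. -/
def TT (φ : ℝ → ℝ) (K11 K12 K22 : ℝ) : ℝ :=
  ∫ uv, φ uv.1 * φ uv.2 ∂(biGauss K11 K12 K22)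

/-- Ṫ(Σ) = E_{(u,v)∼N(0,Σ)}[φ'(u)φ'(v)]. -/
def TTdot (φ : ℝ → ℝ) (K11 K12 K22 : ℝ) : ℝ :=
  ∫ uv, deriv φ uv.1 * deriv φ uv.2 ∂(biGauss K11 K12 K22)

/-- The limiting GP kernels: `Kker … ℓ x y` is K^{(ℓ+1)}(x,y); in particular
`Kker … 0 x y = K^{(1)}(x,y) = (σ_w²/d)·xᵀy` and `Kker … L x y = K^{(L+1)}(x,y)`. -/
def Kker (φ : ℝ → ℝ) (α σv σw : ℝ) {d : ℕ} : ℕ → (Fin d → ℝ) → (Fin d → ℝ) → ℝ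
  | 0 => fun x y => σw ^ 2 / d * ∑ i, x i * y i
  | ℓ + 1 => fun x y =>
      Kker φ α σv σw ℓ x y + α ^ 2 * σv ^ 2 * σw ^ 2 *
        TT φ (Kker φ α σv σw ℓ x x) (Kker φ α σv σw ℓ x y) (Kker φ α σv σw ℓ y y)


/-- Auxiliary downward recursion: `deltaAux … k` is δ^{(L−k)}, with
δ^{(L)} = (σ_w/√n)·w^{(L+1)} and
δ^{(ℓ)} = (I + α(σ_w/√n)W^{(ℓ+1)ᵀ}·diag{φ'(g^{(ℓ+1)})}·(σ_v/√n)V^{(ℓ+1)ᵀ})·δ^{(ℓ+1)}. -/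
def deltaAux {n L d : ℕ} (φ : ℝ → ℝ) (α σv σw : ℝ) (θ : Params n L d) (x : Fin d → ℝ) :
    ℕ → Fin n → ℝ
  | 0 => (σw / Real.sqrt n) • wOut θ
  | k + 1 =>
      deltaAux φ α σv σw θ x k +
        (α * σw * σv / (n : ℝ)) •
          ((Wmat θ (L - k)).transpose *
              Matrix.diagonal (fun i => deriv φ (gvec φ α σv σw θ x (L - k) i)) *
              (Vmat θ (L - k)).transpose).mulVec (deltaAux φ α σv σw θ x k)

/-- δ^{(ℓ)} = ∇_{x^{(ℓ)}} f, for ℓ = 0,…,L. -/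
def deltaVec {n L d : ℕ} (φ : ℝ → ℝ) (α σv σw : ℝ) (θ : Params n L d) (x : Fin d → ℝ)
    (ℓ : ℕ) : Fin n → ℝ :=
  deltaAux φ α σv σw θ x (L - ℓ)


open Matrix
open scoped Matrix.Norms.L2Operator

theorem l2norm_eq_norm_toLp {k : ℕ} (v : Fin k → ℝ) : l2norm v = ‖WithLp.toLp 2 v‖ := by
  simp [l2norm, EuclideanSpace.norm_eq]

theorem specNorm_eq_l2_opNorm {m k : ℕ} (A : Matrix (Fin m) (Fin k) ℝ) : specNorm A = ‖A‖ := by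
  rw [Matrix.l2_opNorm_def, ← ContinuousLinearMap.sSup_unitClosedBall_eq_norm, specNorm]
  congr 1
  ext y
  simp only [Set.mem_image, Set.mem_ofPred_eq, Metric.mem_closedBall, dist_zero_right,
    l2norm_eq_norm_toLp, (WithLp.toLp_surjective 2).exists]
  rfl

theorem l2norm_mulVec_le {m k : ℕ} (A : Matrix (Fin m) (Fin k) ℝ) (v : Fin k → ℝ) :
    l2norm (A *ᵥ v) ≤ ‖A‖ * l2norm v := by
  simp only [l2norm_eq_norm_toLp]
  exact A.l2_opNorm_mulVec (WithLp.toLp 2 v)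

theorem l2norm_smul {k : ℕ} (a : ℝ) (v : Fin k → ℝ) : l2norm (a • v) = |a| * l2norm v := by
  simp only [l2norm_eq_norm_toLp, WithLp.toLp_smul, norm_smul, Real.norm_eq_abs]

theorem l2norm_add_le {k : ℕ} (u v : Fin k → ℝ) : l2norm (u + v) ≤ l2norm u + l2norm v := by
  simpa only [l2norm_eq_norm_toLp, WithLp.toLp_add] using norm_add_le _ _

theorem l2norm_add_smul_mulVec_le {k : ℕ} {c : ℝ} (hc : 0 ≤ c) (A : Matrix (Fin k) (Fin k) ℝ)
    (v : Fin k → ℝ) : l2norm (v + c • A *ᵥ v) ≤ (1 + c * ‖A‖) * l2norm v := calc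
  _ ≤ l2norm v + c * (‖A‖ * l2norm v) := by
    grw [l2norm_add_le, l2norm_smul, abs_of_nonneg hc, l2norm_mulVec_le]
  _ = (1 + c * ‖A‖) * l2norm v := by ring

theorem Matrix.l2_opNorm_transpose {m n : Type*} [Fintype m] [Fintype n] [DecidableEq m]
    [DecidableEq n] (A : Matrix m n ℝ) : ‖Aᵀ‖ = ‖A‖ := by
  rw [← conjTranspose_eq_transpose_of_trivial, l2_opNorm_conjTranspose]

-- `‖g‖` is the sup norm of `g`, which is the spectral norm of `diagonal g`.
theorem l2_opNorm_transpose_mul_diagonal_mul_transpose_le {l m n : Type*} [Fintype l]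
    [Fintype m] [Fintype n] [DecidableEq l] [DecidableEq m] [DecidableEq n] (W : Matrix n m ℝ)
    (g : n → ℝ) (V : Matrix l n ℝ) : ‖Wᵀ * diagonal g * Vᵀ‖ ≤ ‖W‖ * ‖g‖ * ‖V‖ := by
  grw [l2_opNorm_mul, l2_opNorm_mul, l2_opNorm_transpose, l2_opNorm_transpose, l2_opNorm_diagonal]

section ResNet

variable {n L d : ℕ} (φ : ℝ → ℝ) {α σv σw : ℝ} (θ : Params n L d) (x : Fin d → ℝ)

theorem l2norm_deltaAux_zero_le (hn : 1 ≤ n) (hσw : 0 ≤ σw)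
    (hw : l2norm (wOut θ) ≤ 2 * √n) : l2norm (deltaAux φ α σv σw θ x 0) ≤ 2 * σw := by
  have hsn : 0 < √(n : ℝ) := by positivity
  calc l2norm (deltaAux φ α σv σw θ x 0) = σw / √n * l2norm (wOut θ) := by
        rw [deltaAux, l2norm_smul, abs_of_nonneg (by positivity)]
    _ ≤ σw / √n * (2 * √n) := by gcongr
    _ = 2 * σw := by field_simp

theorem l2norm_deltaAux_succ_le (hn : 1 ≤ n) (hα : 0 ≤ α) (hσv : 0 ≤ σv) (hσw : 0 ≤ σw)
    {Cφ : ℝ} (hφ' : ∀ z, |deriv φ z| ≤ Cφ) (k : ℕ)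
    (hW : specNorm (Wmat θ (L - k)) ≤ 3 * √n) (hV : specNorm (Vmat θ (L - k)) ≤ 3 * √n) :
    l2norm (deltaAux φ α σv σw θ x (k + 1)) ≤
      (1 + 9 * α * Cφ * σv * σw) * l2norm (deltaAux φ α σv σw θ x k) := by
  have hn' : (0 : ℝ) < n := by exact_mod_cast hn
  have hCφ : 0 ≤ Cφ := (abs_nonneg _).trans (hφ' 0)
  have hφ'_norm : ‖fun i => deriv φ (gvec φ α σv σw θ x (L - k) i)‖ ≤ Cφ :=
    (pi_norm_le_iff_of_nonneg hCφ).2 fun i => hφ' _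
  have hδ : 0 ≤ l2norm (deltaAux φ α σv σw θ x k) := Real.sqrt_nonneg _
  rw [specNorm_eq_l2_opNorm] at hW hV
  calc l2norm (deltaAux φ α σv σw θ x (k + 1))
      ≤ (1 + α * σw * σv / n * ‖(Wmat θ (L - k))ᵀ *
          diagonal (fun i => deriv φ (gvec φ α σv σw θ x (L - k) i)) * (Vmat θ (L - k))ᵀ‖) *
          l2norm (deltaAux φ α σv σw θ x k) :=
        l2norm_add_smul_mulVec_le (by positivity) _ _
    _ ≤ (1 + α * σw * σv / n * (3 * √n * Cφ * (3 * √n))) *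
          l2norm (deltaAux φ α σv σw θ x k) := by
        grw [l2_opNorm_transpose_mul_diagonal_mul_transpose_le, hW, hV, hφ'_norm]
    _ = (1 + 9 * α * Cφ * σv * σw) * l2norm (deltaAux φ α σv σw θ x k) := by
        field_simp
        rw [Real.sq_sqrt hn'.le]
        ring

end ResNet

theorem backward_gradient_norm_bound_general
    (n L d : ℕ) (hn : 1 ≤ n)
    (α σv σw Cφ : ℝ) (hα : 0 < α) (hσv : 0 < σv) (hσw : 0 < σw)
    (φ : ℝ → ℝ) (hφ' : ∀ z : ℝ, |deriv φ z| ≤ Cφ)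
    (x : Fin d → ℝ)
    (θ : Params n L d)
    (hw : l2norm (wOut θ) ≤ 2 * Real.sqrt n)
    (hWV : ∀ ℓ : ℕ, 1 ≤ ℓ → ℓ ≤ L →
      specNorm (Wmat θ ℓ) ≤ 3 * Real.sqrt n ∧ specNorm (Vmat θ ℓ) ≤ 3 * Real.sqrt n) :
    (∀ ℓ : ℕ, ℓ ≤ L →
      l2norm (deltaVec φ α σv σw θ x ℓ) ≤
        (1 + 9 * α * Cφ * σv * σw) ^ (L - ℓ) * (2 * σw)) ∧
    (∀ ℓ : ℕ, ℓ ≤ L →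
      l2norm (deltaVec φ α σv σw θ x ℓ) ≤
        (1 + 9 * α * Cφ * σv * σw) ^ L * (2 * σw)) := by
  have hCφ : 0 ≤ Cφ := (abs_nonneg _).trans (hφ' 0)
  have hr : 1 ≤ 1 + 9 * α * Cφ * σv * σw := le_add_of_nonneg_right (by positivity)
  have hbound : ∀ k ≤ L, l2norm (deltaAux φ α σv σw θ x k) ≤
      (1 + 9 * α * Cφ * σv * σw) ^ k * (2 * σw) := fun k hk => calc
    _ ≤ (1 + 9 * α * Cφ * σv * σw) ^ k * l2norm (deltaAux φ α σv σw θ x 0) :=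
        le_geom (u := fun j => l2norm (deltaAux φ α σv σw θ x j)) (by positivity) k fun j hj =>
          have hWVj := hWV (L - j) (by omega) (by omega)
          l2norm_deltaAux_succ_le φ θ x hn hα.le hσv.le hσw.le hφ' j hWVj.1 hWVj.2
    _ ≤ _ := by grw [l2norm_deltaAux_zero_le φ θ x hn hσw.le hw]
  refine ⟨fun ℓ hℓ => hbound (L - ℓ) (by omega),
    fun ℓ hℓ => (hbound (L - ℓ) (by omega)).trans ?_⟩
  gcongr
  omega

/-- **Backward gradient vector norm bound.** If ‖w^{(L+1)}‖₂ ≤ 2√n,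
‖W^{(ℓ)}‖, ‖V^{(ℓ)}‖ ≤ 3√n for all ℓ, and |φ'| ≤ C_φ, then for every ℓ ∈ {0,…,L}:
‖δ^{(ℓ)}‖₂ ≤ (1 + 9αC_φσ_vσ_w)^{L−ℓ}·2σ_w; in particular it is ≤ K₂ for all ℓ. -/
theorem backward_gradient_norm_bound
    (n L d : ℕ) (hn : 1 ≤ n) (hL : 1 ≤ L) (hd : 1 ≤ d)
    (α σv σw Cφ : ℝ) (hα : 0 < α) (hσv : 0 < σv) (hσw : 0 < σw) (hCφ : 0 < Cφ)
    (φ : ℝ → ℝ) (hφd : Differentiable ℝ φ) (hφ' : ∀ z : ℝ, |deriv φ z| ≤ Cφ)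
    (B : ℝ) (x : Fin d → ℝ) (hx : l2norm x ≤ B)
    (θ : Params n L d)
    (hw : l2norm (wOut θ) ≤ 2 * Real.sqrt n)
    (hWV : ∀ ℓ : ℕ, 1 ≤ ℓ → ℓ ≤ L →
      specNorm (Wmat θ ℓ) ≤ 3 * Real.sqrt n ∧ specNorm (Vmat θ ℓ) ≤ 3 * Real.sqrt n) :
    (∀ ℓ : ℕ, ℓ ≤ L →
      l2norm (deltaVec φ α σv σw θ x ℓ) ≤
        (1 + 9 * α * Cφ * σv * σw) ^ (L - ℓ) * (2 * σw)) ∧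
    (∀ ℓ : ℕ, ℓ ≤ L →
      l2norm (deltaVec φ α σv σw θ x ℓ) ≤
        (1 + 9 * α * Cφ * σv * σw) ^ L * (2 * σw)) :=
  backward_gradient_norm_bound_general n L d hn α σv σw Cφ hα hσv hσw φ hφ' x θ hw hWV

end
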